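/- Any weight z with r_{k₀k₀k₀}(z) ≠ 0 can be decomposed as z = z' * y where z' is canonical at k₀ (i.e., z'_{pk0} = 1 for all p ∈ {a,b,c} and k = ±k₀), y has order 1, and both r_{k₀k₀k₀}(z') ≠ 0 and r_{k₀k₀k₀}(y) ≠ 0. -/

import Mathlib

/-- `r_{k₀k₀k₀}(z) = Σ_j z_{ak₀j} z_{bk₀j} z_{ck₀j}` for an order-`q` weight. -/
noncomputable def rkkk {d q : ℕ} (k₀ : ZMod d) (z : Fin 3 → ZMod d → Fin q → ℂ) : ℂ :=
  ∑ j : Fin q, z 0 k₀ j * z 1 k₀ j * z 2 k₀ j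

/-!
Some summand of `r_{k₀k₀k₀}(z)` is nonzero; move that hidden node to position `0` and divide
every column by its entries. Dividing a weight column-wise by an order-1 weight `y` and permuting
its nodes multiplies `r_{k₀k₀k₀}` by `(y_{ak₀} y_{bk₀} y_{ck₀})⁻¹`, so nonvanishing is preserved.
The Hermitian symmetry makes the entries at `-k₀` of the chosen node nonzero as well.
-/

section

variable {d q : ℕ} (k₀ : ZMod d)

theorem exists_summand_ne_zero_of_rkkk_ne_zero {z : Fin 3 → ZMod d → Fin q → ℂ}
    (hz : rkkk k₀ z ≠ 0) : ∃ j, z 0 k₀ j * z 1 k₀ j * z 2 k₀ j ≠ 0 := by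
  obtain ⟨j, -, hj⟩ := Finset.exists_ne_zero_of_sum_ne_zero hz
  exact ⟨j, hj⟩

theorem rkkk_perm_mul (z : Fin 3 → ZMod d → Fin q → ℂ) (σ : Equiv.Perm (Fin q))
    (c : Fin 3 → ZMod d → ℂ) :
    rkkk k₀ (fun p k j => z p k (σ j) * c p k) = rkkk k₀ z * (c 0 k₀ * c 1 k₀ * c 2 k₀) := by
  unfold rkkk
  rw [Finset.sum_mul]
  exact Fintype.sum_equiv σ _ _ fun j => by ring

end

/-- The order-1 weight `y_{pk} = z_{pkj}`, with zero entries replaced by `1` so that dividing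
by `y` never hits `x / 0 = 0`. -/
noncomputable def nodeScale {d q : ℕ} (z : Fin 3 → ZMod d → Fin q → ℂ) (j : Fin q)
    (p : Fin 3) (k : ZMod d) : ℂ :=
  if z p k j = 0 then 1 else z p k j

section

variable {d q : ℕ} (z : Fin 3 → ZMod d → Fin q → ℂ) (j : Fin q)

theorem nodeScale_ne_zero (p : Fin 3) (k : ZMod d) : nodeScale z j p k ≠ 0 := by
  unfold nodeScale
  split_ifs with h
  exacts [one_ne_zero, h]

theorem nodeScale_of_ne_zero {p : Fin 3} {k : ZMod d} (h : z p k j ≠ 0) :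
    nodeScale z j p k = z p k j :=
  if_neg h

end

/-- Canonical decomposition: any order-`q` weight `z` (satisfying the Hermitian
constraint `z_{p,−k,j} = conj(z_{pkj})`) with `r_{k₀k₀k₀}(z) ≠ 0` decomposes (up
to a permutation of hidden nodes) as `z = z' * y` with `y` of order 1, `z'`
canonical at `k₀` (entries at `(p, ±k₀, j = 0)` equal `1`), and both
`r_{k₀k₀k₀}(z') ≠ 0` and `r_{k₀k₀k₀}(y) ≠ 0`. -/
theorem canonical_decomposition {d q : ℕ} (hq : 0 < q) (k₀ : ZMod d)
    (z : Fin 3 → ZMod d → Fin q → ℂ)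
    (hherm : ∀ (p : Fin 3) (k : ZMod d) (j : Fin q), z p (-k) j = (starRingEnd ℂ) (z p k j))
    (hz : rkkk k₀ z ≠ 0) :
    ∃ (z' : Fin 3 → ZMod d → Fin q → ℂ) (y : Fin 3 → ZMod d → ℂ)
      (σ : Equiv.Perm (Fin q)),
      (∀ (p : Fin 3) (k : ZMod d) (j : Fin q), z p k (σ j) = z' p k j * y p k) ∧
      (∀ (p : Fin 3), ∀ k ∈ ({k₀, -k₀} : Set (ZMod d)), z' p k ⟨0, hq⟩ = 1) ∧
      rkkk k₀ z' ≠ 0 ∧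
      y 0 k₀ * y 1 k₀ * y 2 k₀ ≠ 0 := by
  obtain ⟨j₀, hj₀⟩ := exists_summand_ne_zero_of_rkkk_ne_zero k₀ hz
  have hpos : ∀ p, z p k₀ j₀ ≠ 0 := by
    simp only [mul_ne_zero_iff] at hj₀
    exact fun p => by fin_cases p <;> tauto
  have hneg : ∀ p, z p (-k₀) j₀ ≠ 0 := fun p => by
    rw [hherm]
    exact (map_ne_zero _).2 (hpos p)
  set y := nodeScale z j₀
  set σ := Equiv.swap ⟨0, hq⟩ j₀
  have hσ : σ ⟨0, hq⟩ = j₀ := Equiv.swap_apply_left _ _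
  have hy : y 0 k₀ * y 1 k₀ * y 2 k₀ ≠ 0 := by simp [y, nodeScale_ne_zero]
  refine ⟨fun p k j => z p k (σ j) * (y p k)⁻¹, y, σ,
    fun p k j => (inv_mul_cancel_right₀ (nodeScale_ne_zero z j₀ p k) _).symm, ?_, ?_, hy⟩
  · rintro p k (rfl | rfl)
    · simp [hσ, y, nodeScale_of_ne_zero z j₀ (hpos p), hpos p]
    · simp [hσ, y, nodeScale_of_ne_zero z j₀ (hneg p), hneg p]
  · rw [rkkk_perm_mul]
    simpa [y, nodeScale_ne_zero] using hz
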